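/- If X₁ and X₂ are two independent random vectors, with values in ℝ^{d₁} and ℝ^{d₂} respectively, such that X₁ belongs to the class C(d₁,b₁) and X₂ belongs to the class C(d₂,b₂) for some b₁,b₂>0, then the random vector (X₁,X₂) with values in ℝ^{d₁+d₂} belongs to the class C(d₁+d₂, max(b₁,b₂)). -/

import Mathlib

/-!
Under independence the law of `(X₁, X₂)` is the product law, whose characteristic function at
`t = (t₁, t₂)` is `φ₁(t₁) φ₂(t₂)`. Since `‖t‖² = ‖t₁‖² + ‖t₂‖²`, once `‖t‖` is large at least one
block `tᵢ` is large; the corresponding factor gives `1 - Cᵢ/‖tᵢ‖^bᵢ ≤ 1 - Cᵢ/‖t‖^max b₁ b₂`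
(for `‖t‖ ≥ 1`), while the other factor has modulus at most one.
-/

open MeasureTheory ProbabilityTheory RealInnerProductSpace

/-- The characteristic function of a measure on a real inner product space. -/
noncomputable def charFn {E : Type*} [NormedAddCommGroup E] [InnerProductSpace ℝ E]
    [MeasurableSpace E] (μ : Measure E) (t : E) : ℂ :=
  ∫ x, Complex.exp ((⟪t, x⟫ : ℝ) * Complex.I) ∂μ

/-- The weak Cramer class `C(d,b)`: the characteristic function satisfies
`|φ(t)| ≤ 1 - C/‖t‖^b` for `‖t‖` large enough. -/
def memClassC {E : Type*} [NormedAddCommGroup E] [InnerProductSpace ℝ E]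
    [MeasurableSpace E] (μ : Measure E) (b : ℝ) : Prop :=
  ∃ C > (0 : ℝ), ∃ R > (0 : ℝ), ∀ t : E, R < ‖t‖ → ‖charFn μ t‖ ≤ 1 - C / ‖t‖ ^ b

open WithLp

lemma div_rpow_le_div_rpow_of_le {C C' x y b b' : ℝ} (hC' : 0 ≤ C') (hCC' : C' ≤ C) (hx : 0 < x)
    (hxy : x ≤ y) (hy : 1 ≤ y) (hb : 0 ≤ b) (hbb' : b ≤ b') : C' / y ^ b' ≤ C / x ^ b :=
  div_le_div₀ (hC'.trans hCC') hCC' (Real.rpow_pos_of_pos hx b)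
    ((Real.rpow_le_rpow hx.le hxy hb).trans (Real.rpow_le_rpow_of_exponent_le hy hbb'))

section
variable {E F : Type*} [NormedAddCommGroup E] [NormedAddCommGroup F]

lemma lt_norm_fst_or_lt_norm_snd {R₁ R₂ : ℝ} {t : WithLp 2 (E × F)}
    (ht : √(R₁ ^ 2 + R₂ ^ 2) < ‖t‖) : R₁ < ‖t.fst‖ ∨ R₂ < ‖t.snd‖ := by
  by_contra! h
  have hsq : ‖t‖ ^ 2 ≤ R₁ ^ 2 + R₂ ^ 2 := by
    rw [prod_norm_sq_eq_of_L2]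
    gcongr <;> [exact h.1; exact h.2]
  exact ht.not_ge (Real.le_sqrt_of_sq_le hsq)

variable [InnerProductSpace ℝ E] [MeasurableSpace E] [InnerProductSpace ℝ F] [MeasurableSpace F]

lemma charFn_eq_charFun (μ : Measure E) : charFn μ = charFun μ := by
  ext t
  simp only [charFn, charFun_apply, real_inner_comm]

lemma memClassC_iff_charFun {μ : Measure E} {b : ℝ} :
    memClassC μ b ↔ ∃ C > (0 : ℝ), ∃ R > (0 : ℝ), ∀ t : E, R < ‖t‖ →
      ‖charFun μ t‖ ≤ 1 - C / ‖t‖ ^ b := by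
  rw [memClassC, charFn_eq_charFun]

lemma charFun_map_linearIsometryEquiv [BorelSpace E] [BorelSpace F] (μ : Measure E)
    (e : E ≃ₗᵢ[ℝ] F) (t : F) : charFun (μ.map e) t = charFun μ (e.symm t) := by
  rw [charFun_apply, charFun_apply, integral_map (by fun_prop) (by fun_prop)]
  simp only [e.inner_map_eq_flip]

lemma memClassC.map_linearIsometryEquiv [BorelSpace E] [BorelSpace F] {μ : Measure E} {b : ℝ}
    (hμ : memClassC μ b) (e : E ≃ₗᵢ[ℝ] F) : memClassC (μ.map e) b := by
  rw [memClassC_iff_charFun] at hμ ⊢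
  obtain ⟨C, hC, R, hR, h⟩ := hμ
  refine ⟨C, hC, R, hR, fun t ht => ?_⟩
  rw [charFun_map_linearIsometryEquiv, ← e.symm.norm_map t]
  exact h _ (by rwa [e.symm.norm_map])

lemma memClassC_prod {μ : Measure E} {ν : Measure F} [IsProbabilityMeasure μ]
    [IsProbabilityMeasure ν] {b₁ b₂ : ℝ} (hb₁ : 0 ≤ b₁) (hb₂ : 0 ≤ b₂) (hμ : memClassC μ b₁)
    (hν : memClassC ν b₂) : memClassC ((μ.prod ν).map (toLp 2)) (max b₁ b₂) := by
  rw [memClassC_iff_charFun] at hμ hν ⊢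
  obtain ⟨C₁, hC₁, R₁, hR₁, h₁⟩ := hμ
  obtain ⟨C₂, hC₂, R₂, hR₂, h₂⟩ := hν
  refine ⟨min C₁ C₂, lt_min hC₁ hC₂, max 1 √(R₁ ^ 2 + R₂ ^ 2), by positivity, fun t ht => ?_⟩
  have ht₁ : 1 ≤ ‖t‖ := (le_max_left _ _).trans ht.le
  rw [charFun_prod, norm_mul]
  rcases lt_norm_fst_or_lt_norm_snd ((le_max_right _ _).trans_lt ht) with h | h
  · calc ‖charFun μ t.fst‖ * ‖charFun ν t.snd‖ ≤ ‖charFun μ t.fst‖ :=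
          mul_le_of_le_one_right (norm_nonneg _) (norm_charFun_le_one _)
      _ ≤ 1 - C₁ / ‖t.fst‖ ^ b₁ := h₁ _ h
      _ ≤ 1 - min C₁ C₂ / ‖t‖ ^ max b₁ b₂ := by
          gcongr 1 - ?_
          exact div_rpow_le_div_rpow_of_le (by positivity) (min_le_left _ _) (hR₁.trans h)
            (norm_fst_le _ t) ht₁ hb₁ (le_max_left _ _)
  · calc ‖charFun μ t.fst‖ * ‖charFun ν t.snd‖ ≤ ‖charFun ν t.snd‖ :=
          mul_le_of_le_one_left (norm_nonneg _) (norm_charFun_le_one _)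
      _ ≤ 1 - C₂ / ‖t.snd‖ ^ b₂ := h₂ _ h
      _ ≤ 1 - min C₁ C₂ / ‖t‖ ^ max b₁ b₂ := by
          gcongr 1 - ?_
          exact div_rpow_le_div_rpow_of_le (by positivity) (min_le_right _ _) (hR₂.trans h)
            (norm_snd_le _ t) ht₁ hb₂ (le_max_right _ _)

lemma ProbabilityTheory.IndepFun.memClassC_map_toLp_prod {Ω : Type*} [MeasurableSpace Ω]
    {P : Measure Ω} [IsProbabilityMeasure P] {X : Ω → E} {Y : Ω → F} (hX : AEMeasurable X P)
    (hY : AEMeasurable Y P) (hXY : IndepFun X Y P) {b₁ b₂ : ℝ} (hb₁ : 0 ≤ b₁) (hb₂ : 0 ≤ b₂)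
    (hμ : memClassC (P.map X) b₁) (hν : memClassC (P.map Y) b₂) :
    memClassC (P.map fun ω => toLp 2 (X ω, Y ω)) (max b₁ b₂) := by
  have := Measure.isProbabilityMeasure_map (μ := P) hX
  have := Measure.isProbabilityMeasure_map (μ := P) hY
  change memClassC (P.map (toLp 2 ∘ fun ω => (X ω, Y ω))) _
  rw [← AEMeasurable.map_map_of_aemeasurable (by fun_prop) (hX.prodMk hY),
    (indepFun_iff_map_prod_eq_prod_map_map hX hY).mp hXY]
  exact memClassC_prod hb₁ hb₂ hμ hν

end

noncomputable def EuclideanSpace.finAddLinearIsometryEquivProd (𝕜 : Type*) [RCLike 𝕜] (n m : ℕ) :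
    EuclideanSpace 𝕜 (Fin (n + m)) ≃ₗᵢ[𝕜]
      WithLp 2 (EuclideanSpace 𝕜 (Fin n) × EuclideanSpace 𝕜 (Fin m)) :=
  (LinearIsometryEquiv.piLpCongrLeft 2 𝕜 𝕜 finSumFinEquiv.symm).trans
    (PiLp.sumPiLpEquivProdLpPiLp 2 _)

lemma EuclideanSpace.finAddLinearIsometryEquivProd_symm_toLp {𝕜 : Type*} [RCLike 𝕜] {n m : ℕ}
    (x : EuclideanSpace 𝕜 (Fin n)) (y : EuclideanSpace 𝕜 (Fin m)) :
    (finAddLinearIsometryEquivProd 𝕜 n m).symm (toLp 2 (x, y)) =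
      toLp 2 (fun i => Sum.elim x y (finSumFinEquiv.symm i)) := by
  ext i
  obtain ⟨j, rfl⟩ := finSumFinEquiv.surjective i
  cases j <;> simp [finAddLinearIsometryEquivProd]

theorem statement1
    {Ω : Type*} [MeasureSpace Ω] [IsProbabilityMeasure (ℙ : Measure Ω)]
    {d₁ d₂ : ℕ}
    (X₁ : Ω → EuclideanSpace ℝ (Fin d₁)) (X₂ : Ω → EuclideanSpace ℝ (Fin d₂))
    (hX₁ : Measurable X₁) (hX₂ : Measurable X₂)
    (hindep : IndepFun X₁ X₂ ℙ)
    {b₁ b₂ : ℝ} (hb₁ : 0 < b₁) (hb₂ : 0 < b₂)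
    (h₁ : memClassC (Measure.map X₁ ℙ) b₁)
    (h₂ : memClassC (Measure.map X₂ ℙ) b₂) :
    memClassC (Measure.map
      (fun ω => (WithLp.equiv 2 (Fin (d₁ + d₂) → ℝ)).symm (fun i : Fin (d₁ + d₂) =>
        Sum.elim (fun j => WithLp.equiv 2 (Fin d₁ → ℝ) (X₁ ω) j)
          (fun j => WithLp.equiv 2 (Fin d₂ → ℝ) (X₂ ω) j) (finSumFinEquiv.symm i))) ℙ)
      (max b₁ b₂) := by
  have hpair :=
    hindep.memClassC_map_toLp_prod hX₁.aemeasurable hX₂.aemeasurable hb₁.le hb₂.le h₁ h₂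
  convert hpair.map_linearIsometryEquiv
    (EuclideanSpace.finAddLinearIsometryEquivProd ℝ d₁ d₂).symm using 1
  rw [Measure.map_map (by fun_prop) (by fun_prop)]
  congr 1
  funext ω
  simp [EuclideanSpace.finAddLinearIsometryEquivProd_symm_toLp]
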